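/- Let G=(V,w,m) be a finite connected weighted graph with m(V) = 1, Deg_max ≤ 1, and κ(x,y) ≥ K > 0 for all x ≠ y ∈ V. Let f : V → ℝ satisfy ⟨f⟩ = 0 and ‖∇f‖_∞ ≤ 1. Then for every r > 0, m({x ∈ V : f(x) > r}) ≤ e^{−K r²}. -/

import Mathlib

open scoped BigOperators

/-- A weighted graph `G = (V, w, m)`: a symmetric edge-weight function `w`
vanishing on the diagonal, a positive vertex measure `m`, and local finiteness. -/
structure WeightedGraph (V : Type*) where
  w : V → V → ℝ
  m : V → ℝ
  w_symm : ∀ x y, w x y = w y x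
  w_nonneg : ∀ x y, 0 ≤ w x y
  w_diag : ∀ x, w x x = 0
  m_pos : ∀ x, 0 < m x
  locFin : ∀ x, {y | 0 < w x y}.Finite

namespace WeightedGraph

variable {V : Type*} (G : WeightedGraph V)

/-- Adjacency: `x ~ y` iff `w x y > 0`. -/
def Adj (x y : V) : Prop := 0 < G.w x y

/-- The underlying simple graph. -/
def toSimpleGraph : SimpleGraph V where
  Adj x y := 0 < G.w x y
  symm := ⟨by intro x y h; rw [G.w_symm y x]; exact h⟩
  loopless := ⟨by intro x h; rw [G.w_diag] at h; exact lt_irrefl 0 h⟩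

/-- Combinatorial graph distance. -/
noncomputable def d (x y : V) : ℕ := G.toSimpleGraph.dist x y

/-- Transition rate `q(x,y) = w(x,y)/m(x)`. -/
noncomputable def q (x y : V) : ℝ := G.w x y / G.m x

/-- The graph Laplacian `Δf(x) = Σ_y q(x,y) (f(y) - f(x))`. -/
noncomputable def lap (f : V → ℝ) (x : V) : ℝ := ∑ᶠ y, G.q x y * (f y - f x)

/-- The weighted vertex degree `Deg(x) = Σ_y q(x,y)`. -/
noncomputable def Deg (x : V) : ℝ := ∑ᶠ y, G.q x y

/-- The maximal weighted vertex degree. -/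
noncomputable def DegMax : ℝ := ⨆ x, G.Deg x

/-- The minimal transition rate over edges, `q_min = inf_{x ~ y} q(x,y)`. -/
noncomputable def qMin : ℝ := sInf {r : ℝ | ∃ x y, G.Adj x y ∧ r = G.q x y}

/-- `‖∇f‖_∞ = sup_{x ~ y} (f x - f y)/d(x,y)`. -/
noncomputable def gradNorm (f : V → ℝ) : ℝ :=
  sSup {r : ℝ | ∃ x y, G.Adj x y ∧ r = (f x - f y) / (G.d x y : ℝ)}

/-- The Ollivier curvature
`κ(x,y) = inf { ∇_{xy} Δf : ∇_{yx} f = 1, ‖∇f‖_∞ = 1 }`. -/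
noncomputable def kappa (x y : V) : ℝ :=
  sInf {r : ℝ | ∃ f : V → ℝ,
    (f y - f x) / (G.d y x : ℝ) = 1 ∧ G.gradNorm f = 1 ∧
    r = (G.lap f x - G.lap f y) / (G.d x y : ℝ)}

/-- A function is harmonic if `Δf = 0`. -/
def Harmonic (f : V → ℝ) : Prop := ∀ x, G.lap f x = 0

/-- A transport plan between `x₀ ≠ y₀`: a nonnegative function supported on
`B₁(x₀) × B₁(y₀)` whose marginals on the spheres `S₁(x₀)`, `S₁(y₀)` are
`q(x₀,·)` and `q(y₀,·)` respectively. -/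
def IsTransportPlan (x₀ y₀ : V) (ρ : V → V → ℝ) : Prop :=
  (∀ x y, 0 ≤ ρ x y) ∧
  (∀ x y, ρ x y ≠ 0 → G.d x₀ x ≤ 1 ∧ G.d y₀ y ≤ 1) ∧
  (∀ x, G.d x₀ x = 1 → ∑ᶠ y, ρ x y = G.q x₀ x) ∧
  (∀ y, G.d y₀ y = 1 → ∑ᶠ x, ρ x y = G.q y₀ y)

/-- The transport functional `Σ_{x,y} ρ(x,y) (1 - d(x,y)/d(x₀,y₀))`. -/
noncomputable def transportCost (x₀ y₀ : V) (ρ : V → V → ℝ) : ℝ :=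
  ∑ᶠ x, ∑ᶠ y, ρ x y * (1 - (G.d x y : ℝ) / (G.d x₀ y₀ : ℝ))

/-- An optimal transport plan attains the supremum of the transport functional. -/
def IsOptimalTransportPlan (x₀ y₀ : V) (ρ : V → V → ℝ) : Prop :=
  G.IsTransportPlan x₀ y₀ ρ ∧
  ∀ ρ' : V → V → ℝ, G.IsTransportPlan x₀ y₀ ρ' →
    G.transportCost x₀ y₀ ρ' ≤ G.transportCost x₀ y₀ ρ

end WeightedGraph

/-!
Heat-semigroup proof (Herbst argument). Along `u_t = e^{tΔ} f` the mean is preserved, and the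
curvature bound, read at a pair of vertices realising the Lipschitz constant, makes that constant
decay like `e^{-Kt}`. For `F(t) = ⟨e^{λ u_t}⟩`, the discrete Green formula together with
`Deg ≤ 1` gives `F' ≥ -(λ² e^{-2Kt} / 2) F`; integrating `(log F)'` over `[0, ∞)`, where
`u_t → 0`, yields `⟨e^{λ f}⟩ ≤ e^{λ² / 4K}`, and Markov's inequality with `λ = 2Kr` concludes.
-/

open Real Finset

namespace Real

lemma two_mul_exp_sub_one_le {t : ℝ} (ht : 0 ≤ t) : 2 * (exp t - 1) ≤ t * (1 + exp t) := by
  let g : ℝ → ℝ := fun u => u * (1 + exp u) - 2 * (exp u - 1)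
  have hg : ∀ u, HasDerivAt g (1 - exp u + u * exp u) u := fun u =>
    (((hasDerivAt_id' u).mul ((hasDerivAt_exp u).const_add 1)).sub
      (((hasDerivAt_exp u).sub_const 1).const_mul 2)).congr_deriv (by ring)
  have hmono : MonotoneOn g (Set.Ici 0) := by
    refine monotoneOn_of_deriv_nonneg (convex_Ici 0)
      (fun u _ => (hg u).continuousAt.continuousWithinAt)
      (fun u _ => (hg u).differentiableAt.differentiableWithinAt) fun u _ => ?_
    -- `g' u = exp u * (exp (-u) - (1 - u))`
    have h := mul_le_mul_of_nonneg_left (add_one_le_exp (-u)) (exp_pos u).le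
    rw [← exp_add, add_neg_cancel, exp_zero] at h
    rw [(hg u).deriv]
    nlinarith
  have h0t := hmono Set.self_mem_Ici ht ht
  simp only [g, zero_mul, exp_zero, sub_self, mul_zero] at h0t
  linarith

lemma mul_exp_sub_one_le (t : ℝ) : t * (exp t - 1) ≤ t ^ 2 / 2 * (1 + exp t) := by
  rcases le_total 0 t with ht | ht
  · nlinarith [two_mul_exp_sub_one_le ht]
  · have h := mul_le_mul_of_nonneg_left (two_mul_exp_sub_one_le (neg_nonneg.2 ht)) (exp_pos t).le
    have he : exp t * exp (-t) = 1 := by rw [← exp_add, add_neg_cancel, exp_zero]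
    nlinarith

lemma sub_mul_exp_sub_exp_le (a b : ℝ) :
    (b - a) * (exp b - exp a) ≤ (b - a) ^ 2 / 2 * (exp a + exp b) := by
  have h := mul_le_mul_of_nonneg_left (mul_exp_sub_one_le (b - a)) (exp_pos a).le
  have he : exp b = exp a * exp (b - a) := by rw [← exp_add, add_sub_cancel]
  rw [he]
  linarith

lemma log_le_log_add_of_hasDerivAt {F F' : ℝ → ℝ} {c K T : ℝ} (hK : 0 < K) (hc : 0 ≤ c)
    (hT : 0 ≤ T) (hF : ∀ s, 0 < F s) (hF' : ∀ s, HasDerivAt F (F' s) s)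
    (hbound : ∀ s ≥ 0, -(c * exp (-(2 * K * s))) * F s ≤ F' s) :
    log (F 0) ≤ log (F T) + c / (2 * K) := by
  let Ψ s := log (F s) - c / (2 * K) * exp (-(2 * K * s))
  have hΨ : ∀ s, HasDerivAt Ψ (F' s / F s + c * exp (-(2 * K * s))) s := fun s => by
    refine (((hF' s).log (hF s).ne').sub
      ((((hasDerivAt_id' s).const_mul (2 * K)).fun_neg.exp).const_mul _)).congr_deriv ?_
    field_simp
    ring
  have hmono : MonotoneOn Ψ (Set.Ici 0) :=
    monotoneOn_of_hasDerivWithinAt_nonneg (convex_Ici 0)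
      (fun s _ => (hΨ s).continuousAt.continuousWithinAt) (fun s _ => (hΨ s).hasDerivWithinAt)
      fun s hs => by
        rw [interior_Ici, Set.mem_Ioi] at hs
        have := (le_div_iff₀ (hF s)).2 (hbound s hs.le)
        linarith
  have h0T := hmono Set.self_mem_Ici hT hT
  simp only [Ψ, mul_zero, neg_zero, exp_zero, mul_one] at h0T
  have : 0 ≤ c / (2 * K) * exp (-(2 * K * T)) := by positivity
  linarith

end Real

open Filter Topology in
lemma Finset.antitoneOn_sup'_of_hasDerivAt {ι : Type*} {s : Finset ι} (hs : s.Nonempty)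
    {φ φ' : ι → ℝ → ℝ} {a : ℝ} (hφ : ∀ i ∈ s, ∀ t, HasDerivAt (φ i) (φ' i t) t)
    (hactive : ∀ t ≥ a, ∀ i ∈ s, φ i t = s.sup' hs (φ · t) → φ' i t ≤ 0) :
    AntitoneOn (fun t => s.sup' hs (φ · t)) (Set.Ici a) := by
  set Φ := fun t => s.sup' hs (φ · t)
  have hcont : Continuous Φ :=
    Continuous.finset_sup'_apply hs fun i hi => continuous_iff_continuousAt.2 fun t =>
      (hφ i hi t).continuousAt
  intro u hu v _ huv
  refine image_le_of_liminf_slope_right_le_deriv_boundary (B := fun _ => Φ u) (B' := 0)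
    hcont.continuousOn le_rfl
    continuousOn_const (fun _ _ => hasDerivWithinAt_const _ _ _) (fun τ hτ r hr => ?_)
    ⟨huv, le_rfl⟩
  replace hr : 0 < r := hr
  -- each `φ i` stays below the line of slope `r` through `(τ, Φ τ)`: the inactive ones by
  -- continuity, the active ones because their derivative is `≤ 0 < r`
  have hbelow : ∀ i ∈ s, ∀ᶠ z in 𝓝[>] τ, φ i z < Φ τ + r * (z - τ) := fun i hi => by
    rcases (le_sup' (φ · τ) hi).lt_or_eq with hlt | heq
    · filter_upwards [((hφ i hi τ).continuousAt.eventually_lt continuousAt_const hlt).filter_mono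
        nhdsWithin_le_nhds, self_mem_nhdsWithin] with z hz (hzτ : τ < z)
      change φ i z < Φ τ at hz
      nlinarith [mul_pos hr (sub_pos.2 hzτ)]
    · have hder := hactive τ (le_trans hu hτ.1) i hi heq
      filter_upwards [((hφ i hi τ).hasDerivWithinAt (s := Set.Ioi τ)).limsup_slope_le'
        (lt_irrefl τ) (hder.trans_lt hr), self_mem_nhdsWithin] with z hz (hzτ : τ < z)
      rw [slope_def_field, div_lt_iff₀ (sub_pos.2 hzτ)] at hz
      change φ i τ = Φ τ at heq
      linarith
  refine Eventually.frequently ?_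
  filter_upwards [(eventually_all_finset s).2 hbelow, self_mem_nhdsWithin] with z hz (hzτ : τ < z)
  rw [slope_def_field, div_lt_iff₀ (sub_pos.2 hzτ)]
  have : Φ z < Φ τ + r * (z - τ) := (sup'_lt_iff hs).2 hz
  linarith

lemma SimpleGraph.Walk.sub_le_mul_length {α : Type*} {H : SimpleGraph α} {g : α → ℝ} {s : ℝ}
    (hs : ∀ u v, H.Adj u v → g v - g u ≤ s) {a b : α} (p : H.Walk a b) :
    g b - g a ≤ s * p.length := by
  induction p with
  | nil => simp
  | cons huv p ih =>
    rw [length_cons, Nat.cast_succ]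
    linarith [hs _ _ huv]

namespace WeightedGraph

variable {V : Type*} (G : WeightedGraph V)

lemma q_nonneg (x y : V) : 0 ≤ G.q x y := div_nonneg (G.w_nonneg x y) (G.m_pos x).le

lemma m_mul_q (x y : V) : G.m x * G.q x y = G.w x y := mul_div_cancel₀ _ (G.m_pos x).ne'

lemma w_eq_zero_of_not_adj {x y : V} (h : ¬G.toSimpleGraph.Adj x y) : G.w x y = 0 :=
  le_antisymm (not_lt.1 h) (G.w_nonneg x y)

lemma d_eq_one_of_adj {x y : V} (h : G.toSimpleGraph.Adj x y) : G.d x y = 1 :=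
  SimpleGraph.dist_eq_one_iff_adj.2 h

lemma d_comm (x y : V) : G.d x y = G.d y x := SimpleGraph.dist_comm

variable [Fintype V]

lemma lap_eq_sum (g : V → ℝ) (x : V) : G.lap g x = ∑ y, G.q x y * (g y - g x) :=
  finsum_eq_sum_of_fintype _

lemma Deg_eq_sum (x : V) : G.Deg x = ∑ y, G.q x y := finsum_eq_sum_of_fintype _

lemma sum_w_mul_left (F : V → ℝ) : ∑ x, ∑ y, G.w x y * F x = ∑ x, G.m x * G.Deg x * F x := by
  simp only [← sum_mul, Deg_eq_sum, mul_sum, m_mul_q]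

lemma sum_w_mul_right (F : V → ℝ) : ∑ x, ∑ y, G.w x y * F y = ∑ x, G.m x * G.Deg x * F x := by
  rw [sum_comm, ← sum_w_mul_left]
  simp only [G.w_symm]

lemma sum_m_mul_lap_mul (g h : V → ℝ) :
    ∑ x, G.m x * (G.lap g x * h x) = -(∑ x, ∑ y, G.w x y * ((g y - g x) * (h y - h x))) / 2 := by
  have hS : ∑ x, G.m x * (G.lap g x * h x) = ∑ x, ∑ y, G.w x y * ((g y - g x) * h x) := by
    simp only [lap_eq_sum, sum_mul, mul_sum, ← m_mul_q]
    exact sum_congr rfl fun x _ => sum_congr rfl fun y _ => by ring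
  have hswap : ∑ x, ∑ y, G.w x y * ((g y - g x) * h x)
      = ∑ x, ∑ y, G.w x y * ((g x - g y) * h y) := by
    rw [sum_comm]
    simp only [G.w_symm]
  rw [hS, eq_div_iff two_ne_zero, mul_two]
  nth_rewrite 2 [hswap]
  simp only [← sum_add_distrib, ← sum_neg_distrib]
  exact sum_congr rfl fun x _ => sum_congr rfl fun y _ => by ring

lemma sum_m_mul_lap (g : V → ℝ) : ∑ x, G.m x * G.lap g x = 0 := by
  simpa using G.sum_m_mul_lap_mul g 1

lemma neg_mul_sum_le_sum_m_mul_lap_mul_exp (hDeg : ∀ x, G.Deg x ≤ 1) {h : V → ℝ} {M : ℝ}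
    (hM : ∀ x y, G.toSimpleGraph.Adj x y → h y - h x ≤ M) :
    -(M ^ 2 / 2) * ∑ x, G.m x * exp (h x) ≤ ∑ x, G.m x * (G.lap h x * exp (h x)) := by
  have hterm : ∀ x y, G.w x y * ((h y - h x) * (exp (h y) - exp (h x)))
      ≤ G.w x y * (M ^ 2 / 2 * (exp (h x) + exp (h y))) := fun x y => by
    by_cases hxy : G.toSimpleGraph.Adj x y
    · have hsq : (h y - h x) ^ 2 ≤ M ^ 2 :=
        sq_le_sq' (by linarith [hM y x hxy.symm]) (hM x y hxy)
      refine mul_le_mul_of_nonneg_left ((sub_mul_exp_sub_exp_le _ _).trans ?_) (G.w_nonneg x y)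
      gcongr
    · simp [G.w_eq_zero_of_not_adj hxy]
  have hsum : ∑ x, ∑ y, G.w x y * ((h y - h x) * (exp (h y) - exp (h x)))
      ≤ M ^ 2 / 2 * (∑ x, ∑ y, G.w x y * exp (h x) + ∑ x, ∑ y, G.w x y * exp (h y)) := by
    calc _ ≤ ∑ x, ∑ y, G.w x y * (M ^ 2 / 2 * (exp (h x) + exp (h y))) :=
          sum_le_sum fun x _ => sum_le_sum fun y _ => hterm x y
      _ = _ := by simp only [mul_add, sum_add_distrib, mul_sum, mul_left_comm]
  have hmass : ∑ x, G.m x * G.Deg x * exp (h x) ≤ ∑ x, G.m x * exp (h x) :=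
    sum_le_sum fun x _ => by
      have := mul_le_mul_of_nonneg_left (hDeg x) (G.m_pos x).le
      gcongr
      simpa using this
  rw [sum_w_mul_left, sum_w_mul_right] at hsum
  rw [sum_m_mul_lap_mul]
  nlinarith [sq_nonneg M]

noncomputable def lapCLM : (V → ℝ) →L[ℝ] (V → ℝ) :=
  ContinuousLinearMap.pi fun x =>
    ∑ y, G.q x y • (ContinuousLinearMap.proj (R := ℝ) (φ := fun _ : V => ℝ) y -
      ContinuousLinearMap.proj x)

lemma lapCLM_apply (g : V → ℝ) : G.lapCLM g = G.lap g := by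
  ext x
  simp [lapCLM, lap_eq_sum]

lemma lap_smul (c : ℝ) (g : V → ℝ) : G.lap (c • g) = c • G.lap g := by
  rw [← lapCLM_apply, ← lapCLM_apply, map_smul]

noncomputable def heat (t : ℝ) : (V → ℝ) →L[ℝ] (V → ℝ) := NormedSpace.exp (t • G.lapCLM)

lemma heat_zero (g : V → ℝ) : G.heat 0 g = g := by
  simp [heat]

lemma hasDerivAt_heat (g : V → ℝ) (t : ℝ) :
    HasDerivAt (fun s => G.heat s g) (G.lap (G.heat t g)) t := by
  have := (hasDerivAt_exp_smul_const' (𝕂 := ℝ) G.lapCLM t).clm_apply (hasDerivAt_const t g)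
  simpa [heat, lapCLM_apply] using this

lemma hasDerivAt_heat_apply (g : V → ℝ) (x : V) (t : ℝ) :
    HasDerivAt (fun s => G.heat s g x) (G.lap (G.heat t g) x) t :=
  hasDerivAt_pi.1 (G.hasDerivAt_heat g t) x

lemma sum_m_mul_heat (g : V → ℝ) (t : ℝ) : ∑ x, G.m x * G.heat t g x = ∑ x, G.m x * g x := by
  have hM : ∀ s, HasDerivAt (fun s => ∑ x, G.m x * G.heat s g x)
      (∑ x, G.m x * G.lap (G.heat s g) x) s := fun s =>
    HasDerivAt.fun_sum fun x _ => (G.hasDerivAt_heat_apply g x s).const_mul _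
  simpa [heat_zero] using is_const_of_deriv_eq_zero (fun s => (hM s).differentiableAt)
    (fun s => by rw [(hM s).deriv, sum_m_mul_lap]) t 0

lemma hasDerivAt_sum_m_mul_exp_heat (f : V → ℝ) (l s : ℝ) :
    HasDerivAt (fun s => ∑ x, G.m x * exp (l * G.heat s f x))
      (∑ x, G.m x * (G.lap (l • G.heat s f) x * exp (l * G.heat s f x))) s :=
  HasDerivAt.fun_sum fun x _ => by
    refine (((G.hasDerivAt_heat_apply f x s).const_mul l).exp.const_mul _).congr_deriv ?_
    rw [lap_smul, Pi.smul_apply, smul_eq_mul]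
    ring

lemma sub_le_gradNorm (g : V → ℝ) {x y : V} (h : G.toSimpleGraph.Adj x y) :
    g x - g y ≤ G.gradNorm g := by
  refine le_csSup ?_ ⟨x, y, h, by simp [G.d_eq_one_of_adj h]⟩
  refine (Set.finite_range fun p : V × V => (g p.1 - g p.2) / G.d p.1 p.2).bddAbove.mono ?_
  rintro _ ⟨x, y, -, rfl⟩
  exact ⟨(x, y), rfl⟩

lemma abs_lap_le_Deg {g : V → ℝ} (hg : ∀ x y, G.toSimpleGraph.Adj x y → g y - g x ≤ 1) (x : V) :
    |G.lap g x| ≤ G.Deg x := by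
  rw [lap_eq_sum, Deg_eq_sum]
  refine (abs_sum_le_sum_abs _ _).trans (sum_le_sum fun y _ => ?_)
  rw [abs_mul, abs_of_nonneg (G.q_nonneg x y)]
  by_cases hxy : G.toSimpleGraph.Adj x y
  · exact mul_le_of_le_one_right (G.q_nonneg x y)
      (abs_le.2 ⟨by linarith [hg y x hxy.symm], hg x y hxy⟩)
  · simp [q, G.w_eq_zero_of_not_adj hxy]

lemma kappa_le {x y : V} {h : V → ℝ} (h₁ : (h y - h x) / G.d y x = 1) (h₂ : G.gradNorm h = 1) :
    G.kappa x y ≤ (G.lap h x - G.lap h y) / G.d x y := by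
  refine csInf_le ⟨-(G.Deg x + G.Deg y), ?_⟩ ⟨h, h₁, h₂, rfl⟩
  rintro _ ⟨f, -, hf, rfl⟩
  have hedge : ∀ u v, G.toSimpleGraph.Adj u v → f v - f u ≤ 1 := fun u v huv =>
    hf ▸ G.sub_le_gradNorm f huv.symm
  have hx := abs_le.1 (G.abs_lap_le_Deg hedge x)
  have hy := abs_le.1 (G.abs_lap_le_Deg hedge y)
  rcases Nat.eq_zero_or_pos (G.d x y) with hd | hd
  · simp only [hd, CharP.cast_eq_zero, div_zero, neg_nonpos]
    linarith
  · rw [le_div_iff₀ (by exact_mod_cast hd)]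
    have : (1 : ℝ) ≤ G.d x y := by exact_mod_cast hd
    nlinarith

lemma finsum_m_lt_le (f : V → ℝ) {l : ℝ} (hl : 0 ≤ l) (r : ℝ) :
    ∑ᶠ x ∈ {x | r < f x}, G.m x ≤ exp (-(l * r)) * ∑ x, G.m x * exp (l * f x) := by
  classical
  rw [finsum_mem_eq_toFinset_sum, mul_sum]
  refine (sum_le_sum fun x hx => ?_).trans
    (sum_le_sum_of_subset_of_nonneg (subset_univ _) fun x _ _ => ?_)
  · have hx : r < f x := by simpa using hx
    rw [mul_left_comm, ← exp_add]
    exact le_mul_of_one_le_right (G.m_pos x).le (one_le_exp (by nlinarith))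
  · have := G.m_pos x
    positivity

variable [Nonempty V]

-- The diagonal pairs contribute `0 / 0 = 0`.
noncomputable def lip (g : V → ℝ) : ℝ :=
  univ.sup' univ_nonempty fun p : V × V => (g p.2 - g p.1) / G.d p.1 p.2

lemma div_d_le_lip (g : V → ℝ) (x y : V) : (g y - g x) / G.d x y ≤ G.lip g :=
  le_sup' (fun p : V × V => (g p.2 - g p.1) / G.d p.1 p.2) (mem_univ (x, y))

lemma lip_nonneg (g : V → ℝ) : 0 ≤ G.lip g := by
  obtain ⟨x⟩ := ‹Nonempty V›
  simpa using G.div_d_le_lip g x x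

lemma sub_le_lip_of_adj (g : V → ℝ) {x y : V} (h : G.toSimpleGraph.Adj x y) :
    g y - g x ≤ G.lip g := by
  simpa [G.d_eq_one_of_adj h] using G.div_d_le_lip g x y

lemma sub_le_lip_mul_d (hconn : G.toSimpleGraph.Connected) (g : V → ℝ) (x y : V) :
    g y - g x ≤ G.lip g * G.d x y := by
  rcases eq_or_ne x y with rfl | hxy
  · simp [d]
  · have hd : (0 : ℝ) < G.d x y := by exact_mod_cast hconn.pos_dist_of_ne hxy
    exact (div_le_iff₀ hd).1 (G.div_d_le_lip g x y)

lemma lip_le (hconn : G.toSimpleGraph.Connected) {g : V → ℝ} {s : ℝ} (hs₀ : 0 ≤ s)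
    (hs : ∀ u v, G.toSimpleGraph.Adj u v → g v - g u ≤ s) : G.lip g ≤ s := by
  refine sup'_le _ _ fun p _ => div_le_of_le_mul₀ (Nat.cast_nonneg _) hs₀ ?_
  obtain ⟨w, hw⟩ := hconn.exists_walk_length_eq_dist p.1 p.2
  simpa [d, hw] using w.sub_le_mul_length hs

lemma lip_le_of_gradNorm_le (hconn : G.toSimpleGraph.Connected) {g : V → ℝ} {c : ℝ} (hc : 0 ≤ c)
    (hg : G.gradNorm g ≤ c) : G.lip g ≤ c :=
  G.lip_le hconn hc fun _ _ h => (G.sub_le_gradNorm g h.symm).trans hg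

lemma exists_adj_lip_le_sub (hconn : G.toSimpleGraph.Connected) {g : V → ℝ} (hpos : 0 < G.lip g) :
    ∃ u v, G.toSimpleGraph.Adj u v ∧ G.lip g ≤ g v - g u := by
  by_contra! hlt
  obtain ⟨⟨x, y⟩, -, hxy⟩ := exists_mem_eq_sup' univ_nonempty
    fun p : V × V => (g p.2 - g p.1) / G.d p.1 p.2
  change G.lip g = (g y - g x) / G.d x y at hxy
  obtain ⟨w, hw⟩ := hconn.exists_walk_length_eq_dist x y
  cases w with
  | nil => simp [hxy] at hpos
  | cons huv w =>
    have hd : (0 : ℝ) < G.d x y := by simp [d, ← hw]; positivity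
    have := w.sub_le_mul_length fun u v h => (hlt u v h).le
    rw [eq_div_iff hd.ne', d, ← hw, SimpleGraph.Walk.length_cons, Nat.cast_succ] at hxy
    linarith [hlt _ _ huv]

lemma gradNorm_inv_lip_smul (hconn : G.toSimpleGraph.Connected) {g : V → ℝ} (hpos : 0 < G.lip g) :
    G.gradNorm ((G.lip g)⁻¹ • g) = 1 := by
  obtain ⟨u, v, huv, hlip⟩ := G.exists_adj_lip_le_sub hconn hpos
  refine le_antisymm (Real.sSup_le ?_ zero_le_one) ?_
  · rintro _ ⟨x, y, hxy : G.toSimpleGraph.Adj x y, rfl⟩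
    rw [G.d_eq_one_of_adj hxy, Nat.cast_one, div_one, Pi.smul_apply, Pi.smul_apply, smul_eq_mul,
      smul_eq_mul, ← mul_sub, inv_mul_le_one₀ hpos]
    exact G.sub_le_lip_of_adj g hxy.symm
  · calc (1 : ℝ) ≤ (G.lip g)⁻¹ * (g v - g u) := by rwa [le_inv_mul_iff₀ hpos, mul_one]
      _ = ((G.lip g)⁻¹ • g) v - ((G.lip g)⁻¹ • g) u := by simp [mul_sub]
      _ ≤ _ := G.sub_le_gradNorm _ huv.symm

lemma lap_sub_lap_div_d_le (hconn : G.toSimpleGraph.Connected) {K : ℝ}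
    (hκ : ∀ x y : V, x ≠ y → K ≤ G.kappa x y) {g : V → ℝ} {x y : V}
    (hmax : (g y - g x) / G.d x y = G.lip g) :
    (G.lap g y - G.lap g x) / G.d x y ≤ -(K * G.lip g) := by
  rcases eq_or_ne x y with rfl | hxy
  · simp [← hmax]
  rcases (G.lip_nonneg g).eq_or_lt with hzero | hpos
  · have hconst : ∀ u v, g v - g u = 0 := fun u v => by
      have huv := G.sub_le_lip_mul_d hconn g u v
      have hvu := G.sub_le_lip_mul_d hconn g v u
      rw [← hzero, zero_mul] at huv hvu
      linarith
    simp [lap_eq_sum, hconst, ← hzero]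
  set h := (G.lip g)⁻¹ • g
  have h₁ : (h y - h x) / G.d y x = 1 := by
    simp only [h, Pi.smul_apply, smul_eq_mul, ← mul_sub, G.d_comm y x, mul_div_assoc, hmax,
      inv_mul_cancel₀ hpos.ne']
  have hk := (hκ x y hxy).trans (G.kappa_le h₁ (G.gradNorm_inv_lip_smul hconn hpos))
  simp only [h, lap_smul, Pi.smul_apply, smul_eq_mul, ← mul_sub, mul_div_assoc,
    le_inv_mul_iff₀ hpos] at hk
  rw [← neg_sub, neg_div]
  linarith

lemma lip_heat_le (hconn : G.toSimpleGraph.Connected) {K : ℝ}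
    (hκ : ∀ x y : V, x ≠ y → K ≤ G.kappa x y) (f : V → ℝ) {t : ℝ} (ht : 0 ≤ t) :
    G.lip (G.heat t f) ≤ exp (-(K * t)) * G.lip f := by
  let φ (p : V × V) (s : ℝ) := exp (K * s) * ((G.heat s f p.2 - G.heat s f p.1) / G.d p.1 p.2)
  have hsup : ∀ s, univ.sup' univ_nonempty (φ · s) = exp (K * s) * G.lip (G.heat s f) :=
    fun s => (mul₀_sup' (exp_pos _).le _ _ _).symm
  have hφ : ∀ p s, HasDerivAt (φ p) (exp (K * s) * (K *
      ((G.heat s f p.2 - G.heat s f p.1) / G.d p.1 p.2) +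
      (G.lap (G.heat s f) p.2 - G.lap (G.heat s f) p.1) / G.d p.1 p.2)) s := fun p s =>
    ((((hasDerivAt_id' s).const_mul K).exp).mul
      (((G.hasDerivAt_heat_apply f p.2 s).fun_sub (G.hasDerivAt_heat_apply f p.1 s)).div_const _))
      |>.congr_deriv (by ring)
  have hanti := Finset.antitoneOn_sup'_of_hasDerivAt univ_nonempty (fun p _ => hφ p) (a := 0)
    fun s _ p _ hp => by
      rw [hsup, mul_right_inj' (exp_pos _).ne'] at hp
      have := G.lap_sub_lap_div_d_le hconn hκ hp
      rw [hp]
      nlinarith [exp_pos (K * s)]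
  have h0t := hanti Set.self_mem_Ici ht ht
  simp only [hsup, heat_zero, mul_zero, exp_zero, one_mul] at h0t
  rwa [exp_neg, le_inv_mul_iff₀ (exp_pos _)]

lemma le_lip_mul_diam (hconn : G.toSimpleGraph.Connected) (hm : ∑ x, G.m x = 1) {g : V → ℝ}
    (hmean : ∑ x, G.m x * g x = 0) (x : V) : g x ≤ G.lip g * G.toSimpleGraph.diam := by
  have hdiam := G.toSimpleGraph.connected_iff_ediam_ne_top.1 hconn
  calc g x = ∑ y, G.m y * (g x - g y) := by
        simp only [mul_sub, sum_sub_distrib, ← sum_mul, hm, hmean, one_mul, sub_zero]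
    _ ≤ ∑ y, G.m y * (G.lip g * G.toSimpleGraph.diam) := by
        refine sum_le_sum fun y _ => mul_le_mul_of_nonneg_left ?_ (G.m_pos y).le
        refine (G.sub_le_lip_mul_d hconn g y x).trans (mul_le_mul_of_nonneg_left ?_ (G.lip_nonneg g))
        exact_mod_cast G.toSimpleGraph.dist_le_diam hdiam
    _ = G.lip g * G.toSimpleGraph.diam := by rw [← sum_mul, hm, one_mul]

lemma sum_m_mul_exp_le_exp_lip_mul_diam (hconn : G.toSimpleGraph.Connected)
    (hm : ∑ x, G.m x = 1) {g : V → ℝ} (hmean : ∑ x, G.m x * g x = 0) {l : ℝ} (hl : 0 ≤ l) :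
    ∑ x, G.m x * exp (l * g x) ≤ exp (l * (G.lip g * G.toSimpleGraph.diam)) := calc
  _ ≤ ∑ x, G.m x * exp (l * (G.lip g * G.toSimpleGraph.diam)) :=
      sum_le_sum fun x _ => mul_le_mul_of_nonneg_left
        (exp_le_exp.2 (mul_le_mul_of_nonneg_left (G.le_lip_mul_diam hconn hm hmean x) hl))
        (G.m_pos x).le
  _ = _ := by rw [← sum_mul, hm, one_mul]

open Filter Topology in
lemma sum_m_mul_exp_le (hconn : G.toSimpleGraph.Connected) (hm : ∑ x, G.m x = 1)
    (hDeg : ∀ x, G.Deg x ≤ 1) {K : ℝ} (hK : 0 < K) (hκ : ∀ x y : V, x ≠ y → K ≤ G.kappa x y)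
    {f : V → ℝ} (hmean : ∑ x, G.m x * f x = 0) (hlip : G.lip f ≤ 1) {l : ℝ} (hl : 0 ≤ l) :
    ∑ x, G.m x * exp (l * f x) ≤ exp (l ^ 2 / (4 * K)) := by
  let u s := G.heat s f
  let F s := ∑ x, G.m x * exp (l * u s x)
  have hF : ∀ s, 0 < F s := fun s =>
    sum_pos (fun x _ => mul_pos (G.m_pos x) (exp_pos _)) univ_nonempty
  have hlip_u : ∀ s ≥ 0, G.lip (u s) ≤ exp (-(K * s)) := fun s hs =>
    (G.lip_heat_le hconn hκ f hs).trans (mul_le_of_le_one_right (exp_pos _).le hlip)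
  have hbound : ∀ s ≥ 0, -(l ^ 2 / 2 * exp (-(2 * K * s))) * F s ≤
      ∑ x, G.m x * (G.lap (l • u s) x * exp (l * u s x)) := fun s hs => by
    have hedge : ∀ x y, G.toSimpleGraph.Adj x y → (l • u s) y - (l • u s) x ≤ l * exp (-(K * s)) :=
      fun x y hxy => by
        simp only [Pi.smul_apply, smul_eq_mul, ← mul_sub]
        exact mul_le_mul_of_nonneg_left ((G.sub_le_lip_of_adj _ hxy).trans (hlip_u s hs)) hl
    convert G.neg_mul_sum_le_sum_m_mul_lap_mul_exp hDeg hedge using 2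
    · rw [mul_pow, ← exp_nat_mul]
      ring_nf
    all_goals rfl
  have hlog : ∀ T ≥ 0, log (F 0) ≤ l * (exp (-(K * T)) * G.toSimpleGraph.diam) + l ^ 2 / (4 * K) :=
    fun T hT => by
      have h0T := log_le_log_add_of_hasDerivAt hK (by positivity) hT hF
        (G.hasDerivAt_sum_m_mul_exp_heat f l) hbound
      have hFT : F T ≤ exp (l * (exp (-(K * T)) * G.toSimpleGraph.diam)) :=
        (G.sum_m_mul_exp_le_exp_lip_mul_diam hconn hm ((G.sum_m_mul_heat f T).trans hmean) hl).trans
          (exp_le_exp.2 (by gcongr; exact hlip_u T hT))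
      rw [show l ^ 2 / 2 / (2 * K) = l ^ 2 / (4 * K) by ring] at h0T
      linarith [(log_le_log (hF T) hFT).trans_eq (log_exp _)]
  have hlim : Tendsto (fun T => l * (exp (-(K * T)) * G.toSimpleGraph.diam) + l ^ 2 / (4 * K))
      atTop (𝓝 (l ^ 2 / (4 * K))) := by
    simpa using ((tendsto_exp_neg_atTop_nhds_zero.comp (tendsto_id.const_mul_atTop hK)).mul_const
      (G.toSimpleGraph.diam : ℝ)).const_mul l |>.add_const (l ^ 2 / (4 * K))
  have h0 := ge_of_tendsto hlim (eventually_ge_atTop 0 |>.mono hlog)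
  simpa [F, u, heat_zero] using (log_le_iff_le_exp (hF 0)).1 h0

end WeightedGraph

/-- **concentration of measure.** On a finite connected weighted
graph with `m(V) = 1`, `Deg_max ≤ 1`, and `κ(x,y) ≥ K > 0` for all `x ≠ y`:
if `⟨f⟩ = 0` and `‖∇f‖_∞ ≤ 1`, then for every `r > 0`,
`m(f > r) ≤ e^{-K r²}`. -/
theorem concentration_of_measure
    {V : Type*} [Fintype V] (G : WeightedGraph V)
    (hconn : G.toSimpleGraph.Connected)
    (hm : ∑ x : V, G.m x = 1)
    (hDeg : ∀ x, G.Deg x ≤ 1)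
    (K : ℝ) (hK : 0 < K)
    (hκ : ∀ x y : V, x ≠ y → K ≤ G.kappa x y)
    (f : V → ℝ)
    (hmean : ∑ x : V, G.m x * f x = 0)
    (hgrad : G.gradNorm f ≤ 1) :
    ∀ r : ℝ, 0 < r →
      (∑ᶠ x ∈ {x : V | r < f x}, G.m x) ≤ Real.exp (-(K * r ^ 2)) := by
  intro r hr
  have : Nonempty V := by
    by_contra h
    simp [not_nonempty_iff.1 h] at hm
  have hl : 0 ≤ 2 * K * r := by positivity
  have hmoment := G.sum_m_mul_exp_le hconn hm hDeg hK hκ hmean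
    (G.lip_le_of_gradNorm_le hconn zero_le_one hgrad) hl
  calc ∑ᶠ x ∈ {x | r < f x}, G.m x
      ≤ exp (-(2 * K * r * r)) * ∑ x, G.m x * exp (2 * K * r * f x) := G.finsum_m_lt_le f hl r
    _ ≤ exp (-(2 * K * r * r)) * exp ((2 * K * r) ^ 2 / (4 * K)) := by gcongr
    _ = exp (-(K * r ^ 2)) := by
        rw [← exp_add]
        congr 1
        field_simp
        ring
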